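/- arXiv:2008.11023 — 8 statements merged into one kernel-verified Lean document; each statement's English description precedes it below -/
import Mathlib

section
/- Let X be a T0 space. If 𝒦 is a nonempty compact saturated subset of the Smyth power space P_S(X), then ⋃𝒦 is a nonempty compact saturated subset of X. -/
/-- A set is saturated if it is the intersection of all open sets containing it. -/
def IsSaturatedSet {X : Type*} [TopologicalSpace X] (A : Set X) : Prop :=
  A = ⋂₀ {U : Set X | IsOpen U ∧ A ⊆ U}

/-- The nonempty compact saturated subsets of `X`. -/
def KSet (X : Type*) [TopologicalSpace X] :=
  {K : Set X // K.Nonempty ∧ IsCompact K ∧ IsSaturatedSet K}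

/-- The upper Vietoris topology on `K(X)`, with basic open sets `□U = {K : K ⊆ U}`. -/
def upperVietoris (X : Type*) [TopologicalSpace X] : TopologicalSpace (KSet X) :=
  TopologicalSpace.generateFrom
    {s : Set (KSet X) | ∃ U : Set X, IsOpen U ∧ s = {K : KSet X | K.1 ⊆ U}}

theorem mem_of_sat {X : Type*} [TopologicalSpace X] {K : Set X} (hK : IsSaturatedSet K)
    {a x : X} (ha : a ∈ K) (hax : a ∈ closure ({x} : Set X)) : x ∈ K := by
  rw [hK]
  rintro U ⟨hUo, hKU⟩
  obtain ⟨y, hyU, hy⟩ := (mem_closure_iff.1 hax) U hUo (hKU ha)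
  rcases hy with rfl
  exact hyU

/-- If `𝒦` is a nonempty compact saturated subset of the Smyth power space `P_S(X)`,
then `⋃𝒦` is a nonempty compact saturated subset of `X`. -/
theorem stmt4 {X : Type*} [TopologicalSpace X] [T0Space X] (𝒦 : Set (KSet X))
    (hne : 𝒦.Nonempty)
    (hcomp : @IsCompact (KSet X) (upperVietoris X) 𝒦)
    (hsat : @IsSaturatedSet (KSet X) (upperVietoris X) 𝒦) :
    (⋃ K ∈ 𝒦, (K : KSet X).1).Nonempty ∧ IsCompact (⋃ K ∈ 𝒦, (K : KSet X).1) ∧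
      IsSaturatedSet (⋃ K ∈ 𝒦, (K : KSet X).1) := by
  classical
  obtain ⟨K0, hK0⟩ := hne
  obtain ⟨x0, hx0⟩ := K0.2.1
  refine ⟨⟨x0, Set.mem_biUnion hK0 hx0⟩, ?_, ?_⟩
  · refine isCompact_of_finite_subcover fun {ι} U hUo hcov => ?_
    have hsub : ∀ K : 𝒦, ∃ t : Finset ι, (K : KSet X).1 ⊆ ⋃ i ∈ t, U i := fun K =>
      K.1.2.2.1.elim_finite_subcover U hUo fun x hx => hcov (Set.mem_biUnion K.2 hx)
    choose t ht using hsub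
    letI := upperVietoris X
    set V : 𝒦 → Set (KSet X) := fun K => {L : KSet X | L.1 ⊆ ⋃ i ∈ t K, U i} with hV
    have hVo : ∀ K, IsOpen (V K) := fun K =>
      TopologicalSpace.isOpen_generateFrom_of_mem
        ⟨⋃ i ∈ t K, U i, isOpen_biUnion fun i _ => hUo i, rfl⟩
    have hcov' : 𝒦 ⊆ ⋃ K, V K := fun L hL => Set.mem_iUnion.2 ⟨⟨L, hL⟩, ht ⟨L, hL⟩⟩
    obtain ⟨s, hs⟩ := hcomp.elim_finite_subcover V hVo hcov'
    refine ⟨s.biUnion t, ?_⟩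
    rintro x hx
    obtain ⟨K, hK, hxK⟩ := Set.mem_iUnion₂.1 hx
    obtain ⟨k, hks, hKk⟩ := Set.mem_iUnion₂.1 (hs hK)
    obtain ⟨i, hit, hxi⟩ := Set.mem_iUnion₂.1 (hKk hxK)
    exact Set.mem_iUnion₂.2 ⟨i, Finset.mem_biUnion.2 ⟨k, hks, hit⟩, hxi⟩
  · refine Set.Subset.antisymm (fun x hx U hU => hU.2 hx) fun x hx => ?_
    by_cases h : ∃ a ∈ ⋃ K ∈ 𝒦, (K : KSet X).1, a ∈ closure ({x} : Set X)
    · obtain ⟨a, ha, hax⟩ := h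
      obtain ⟨K, hK, haK⟩ := Set.mem_iUnion₂.1 ha
      exact Set.mem_biUnion hK (mem_of_sat K.2.2.2 haK hax)
    · push_neg at h
      have hxU : x ∈ (closure ({x} : Set X))ᶜ :=
        hx _ ⟨isOpen_compl_iff.2 isClosed_closure, fun a ha => h a ha⟩
      exact absurd (subset_closure (Set.mem_singleton x)) hxU
end

section
/- Let P be a poset and D a countable directed subset of P. Then there exists a countable chain C ⊆ D such that D = ↓C ∩ D (i.e., every element of D is below some element of C); consequently, if sup D exists then sup C exists and sup C = sup D. -/
/-- For a countable directed subset `D` of a poset, there is a countable chain `C ⊆ D`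
cofinal in `D`; consequently any lub of `D` is a lub of `C`. -/
theorem stmt5 {P : Type*} [PartialOrder P] (D : Set P)
    (hc : D.Countable) (hne : D.Nonempty) (hdir : DirectedOn (· ≤ ·) D) :
    ∃ C : Set P, C ⊆ D ∧ C.Countable ∧ IsChain (· ≤ ·) C ∧
      (∀ d ∈ D, ∃ c ∈ C, d ≤ c) ∧
      ∀ x : P, IsLUB D x → IsLUB C x := by
  obtain ⟨f, hf⟩ := hc.exists_surjective hne
  -- upper bound function on the subtype
  have hub : ∀ a b : D, ∃ z : D, (a : P) ≤ z ∧ (b : P) ≤ z := by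
    intro a b
    obtain ⟨z, hz, h1, h2⟩ := hdir a a.2 b b.2
    exact ⟨⟨z, hz⟩, h1, h2⟩
  choose u hu1 hu2 using hub
  -- recursive chain
  let g : ℕ → D := fun n => Nat.rec (f 0) (fun n gn => u gn (f (n + 1))) n
  have hmono : Monotone fun n => (g n).1 := by
    apply monotone_nat_of_le_succ
    intro n
    show (g n).1 ≤ (g (n+1)).1
    exact hu1 (g n) (f (n + 1))
  have key : ∀ (d : P) (hd : d ∈ D) (n : ℕ), f n = ⟨d, hd⟩ → d ≤ (g n).1 := by
    intro d hd n hn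
    cases n with
    | zero =>
      show d ≤ (f 0).1
      rw [hn]
    | succ k =>
      show d ≤ (u (g k) (f (k + 1))).1
      rw [hn]
      exact hu2 (g k) ⟨d, hd⟩
  refine ⟨(↑) '' Set.range g, ?_, ?_, ?_, ?_, ?_⟩
  · rintro x ⟨⟨y, hy⟩, -, rfl⟩; exact hy
  · exact ((Set.countable_range g).image _)
  · rintro x ⟨a, ⟨m, rfl⟩, rfl⟩ y ⟨b, ⟨n, rfl⟩, rfl⟩ _
    rcases le_total m n with h | h
    · exact Or.inl (hmono h)
    · exact Or.inr (hmono h)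
  · intro d hd
    obtain ⟨n, hn⟩ := hf ⟨d, hd⟩
    exact ⟨(g n).1, ⟨g n, ⟨n, rfl⟩, rfl⟩, key d hd n hn⟩
  · intro x hx
    constructor
    · rintro y ⟨a, ⟨n, rfl⟩, rfl⟩
      exact hx.1 (g n).2
    · intro y hy
      apply hx.2
      intro d hd
      obtain ⟨n, hn⟩ := hf ⟨d, hd⟩
      exact (key d hd n hn).trans (hy ⟨g n, ⟨n, rfl⟩, rfl⟩)
end

section
/- A poset P is an ω-dcpo (every countable directed subset has a supremum) if and only if every countable chain in P has a supremum. -/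
/-- A poset is an ω-dcpo (every nonempty countable directed subset has a supremum)
iff every nonempty countable chain has a supremum. -/
theorem stmt6 {P : Type*} [PartialOrder P] :
    (∀ D : Set P, D.Countable → D.Nonempty → DirectedOn (· ≤ ·) D → ∃ x, IsLUB D x) ↔
    (∀ C : Set P, C.Countable → C.Nonempty → IsChain (· ≤ ·) C → ∃ x, IsLUB C x) := by
  constructor
  · intro h C hc hne hch
    exact h C hc hne hch.directedOn
  · intro h D hcnt hne hdir
    obtain ⟨f, hf⟩ := hcnt.exists_eq_range hne
    have hfD : ∀ n, f n ∈ D := fun n => hf ▸ Set.mem_range_self n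
    choose z hzD hz1 hz2 using
      fun (a : P) (ha : a ∈ D) (b : P) (hb : b ∈ D) => hdir a ha b hb
    -- build a monotone sequence in D dominating f
    let g : ℕ → {x // x ∈ D} := fun n =>
      Nat.rec ⟨f 0, hfD 0⟩
        (fun n p => ⟨z p.1 p.2 (f (n+1)) (hfD (n+1)),
          hzD p.1 p.2 (f (n+1)) (hfD (n+1))⟩) n
    have hstep : ∀ n, (g n).1 ≤ (g (n+1)).1 := by
      intro n
      show (g n).1 ≤ (z (g n).1 (g n).2 (f (n+1)) (hfD (n+1)) : P)
      exact hz1 (g n).1 (g n).2 (f (n+1)) (hfD (n+1))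
    have hmono : Monotone fun n => (g n).1 := monotone_nat_of_le_succ hstep
    have hfg : ∀ n, f n ≤ (g n).1 := by
      intro n
      cases n with
      | zero => exact le_refl _
      | succ n =>
        show f (n+1) ≤ (z (g n).1 (g n).2 (f (n+1)) (hfD (n+1)) : P)
        exact hz2 (g n).1 (g n).2 (f (n+1)) (hfD (n+1))
    set C : Set P := Set.range fun n => (g n).1 with hC
    have hCD : C ⊆ D := by
      rintro _ ⟨n, rfl⟩; exact (g n).2
    obtain ⟨x, hx⟩ := h C (Set.countable_range _) ⟨(g 0).1, 0, rfl⟩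
      (monotone_nat_of_le_succ hstep).isChain_range
    refine ⟨x, ⟨?_, ?_⟩⟩
    · intro d hd
      rw [hf] at hd
      obtain ⟨n, rfl⟩ := hd
      exact le_trans (hfg n) (hx.1 ⟨n, rfl⟩)
    · intro y hy
      exact hx.2 fun c hc => hy (hCD hc)
end

section
/- For a T0 space X the following are equivalent: (1) for every countably-directed subset D (in the specialization order), the closure of D has a generic point; (2) X with the specialization order is an ω*-dcpo and every open set of X is ω*-Scott open; (3) for every countably-directed D and open U, ⋂_{d∈D} ↑d ⊆ U implies d ∈ U for some d ∈ D; (4) for every countably-directed D, cl(D) ∩ ⋂_{d∈D} ↑d ≠ ∅. -/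
/-- The specialization order of a topological space: `x ≤ y` iff `x ∈ closure {y}`. -/
def specLE {X : Type*} [TopologicalSpace X] (x y : X) : Prop := x ∈ closure {y}

/-- A nonempty subset `D` is countably-directed (for the specialization order) if every
nonempty countable subset of `D` has an upper bound in `D`. -/
def CDspec {X : Type*} [TopologicalSpace X] (D : Set X) : Prop :=
  D.Nonempty ∧ ∀ S ⊆ D, S.Countable → S.Nonempty → ∃ b ∈ D, ∀ s ∈ S, specLE s b

/-- `x` is a supremum of `D` for the specialization order. -/
def IsSupSpec {X : Type*} [TopologicalSpace X] (D : Set X) (x : X) : Prop :=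
  (∀ d ∈ D, specLE d x) ∧ ∀ y : X, (∀ d ∈ D, specLE d y) → specLE x y

/-- `U` is ω*-Scott open for the specialization order: an upper set meeting every
countably-directed set whose supremum lies in `U`. -/
def OmegaStarScottOpenSpec {X : Type*} [TopologicalSpace X] (U : Set X) : Prop :=
  (∀ a b : X, specLE a b → a ∈ U → b ∈ U) ∧
    ∀ D : Set X, CDspec D → ∀ x : X, IsSupSpec D x → x ∈ U → (D ∩ U).Nonempty

lemma specLE_mem_open {X : Type*} [TopologicalSpace X] {a b : X} (h : specLE a b)
    {U : Set X} (hU : IsOpen U) (ha : a ∈ U) : b ∈ U := by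
  rcases mem_closure_iff.mp h U hU ha with ⟨z, hzU, hz⟩
  simp only [Set.mem_singleton_iff] at hz
  subst hz; exact hzU

lemma specLE_antisymm {X : Type*} [TopologicalSpace X] [T0Space X] {a b : X}
    (h1 : specLE a b) (h2 : specLE b a) : a = b :=
  ((specializes_iff_mem_closure.mpr h2).antisymm
    (specializes_iff_mem_closure.mpr h1)).eq

lemma isSup_of_mem {X : Type*} [TopologicalSpace X] {D : Set X} {x : X}
    (hx : x ∈ closure D ∩ ⋂ d ∈ D, {z : X | specLE d z}) : IsSupSpec D x := by
  obtain ⟨hxc, hxi⟩ := hx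
  constructor
  · intro d hd; exact Set.mem_iInter₂.mp hxi d hd
  · intro y hy
    have hsub : closure D ⊆ closure {y} :=
      closure_minimal (fun d hd => hy d hd) isClosed_closure
    exact hsub hxc

/-- Characterizations of ω*-d-spaces. -/
theorem stmt8 {X : Type*} [TopologicalSpace X] [T0Space X] :
    List.TFAE
      [∀ D : Set X, CDspec D → ∃ x : X, closure D = closure {x},
       (∀ D : Set X, CDspec D → ∃ x : X, IsSupSpec D x) ∧
         ∀ U : Set X, IsOpen U → OmegaStarScottOpenSpec U,
       ∀ D : Set X, CDspec D → ∀ U : Set X, IsOpen U →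
         (⋂ d ∈ D, {z : X | specLE d z}) ⊆ U → ∃ d ∈ D, d ∈ U,
       ∀ D : Set X, CDspec D → (closure D ∩ ⋂ d ∈ D, {z : X | specLE d z}).Nonempty] := by
  tfae_have 1 → 4
  | h1, D, hD => by
    obtain ⟨x, hx⟩ := h1 D hD
    refine ⟨x, ?_, Set.mem_iInter₂.mpr fun d hd => ?_⟩
    · rw [hx]; exact subset_closure rfl
    · show d ∈ closure {x}
      rw [← hx]; exact subset_closure hd
  tfae_have 4 → 1
  | h4, D, hD => by
    obtain ⟨x, hxc, hxi⟩ := h4 D hD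
    refine ⟨x, subset_antisymm ?_ ?_⟩
    · exact closure_minimal (fun d hd => Set.mem_iInter₂.mp hxi d hd) isClosed_closure
    · exact closure_minimal (Set.singleton_subset_iff.mpr hxc) isClosed_closure
  tfae_have 4 → 3
  | h4, D, hD, U, hU, hsub => by
    obtain ⟨x, hxc, hxi⟩ := h4 D hD
    rcases mem_closure_iff.mp hxc U hU (hsub hxi) with ⟨d, hdU, hdD⟩
    exact ⟨d, hdD, hdU⟩
  tfae_have 3 → 4
  | h3, D, hD => by
    by_contra hne
    rw [Set.not_nonempty_iff_eq_empty] at hne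
    have hsub : (⋂ d ∈ D, {z : X | specLE d z}) ⊆ (closure D)ᶜ := by
      intro z hz hzc
      have : z ∈ closure D ∩ ⋂ d ∈ D, {z : X | specLE d z} := ⟨hzc, hz⟩
      rw [hne] at this
      exact this
    obtain ⟨d, hdD, hdU⟩ := h3 D hD _ isClosed_closure.isOpen_compl hsub
    exact hdU (subset_closure hdD)
  tfae_have 4 → 2
  | h4 => by
    constructor
    · intro D hD
      obtain ⟨x, hx⟩ := h4 D hD
      exact ⟨x, isSup_of_mem hx⟩
    · intro U hU
      refine ⟨fun a b hab ha => specLE_mem_open hab hU ha, ?_⟩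
      intro D hD x hx hxU
      obtain ⟨x', hx'⟩ := h4 D hD
      have hsx' := isSup_of_mem hx'
      have heq : x' = x := specLE_antisymm (hsx'.2 x hx.1) (hx.2 x' hsx'.1)
      subst heq
      rcases mem_closure_iff.mp hx'.1 U hU hxU with ⟨d, hdU, hdD⟩
      exact ⟨d, hdD, hdU⟩
  tfae_have 2 → 3
  | ⟨hsup, hscott⟩, D, hD, U, hU, hsub => by
    obtain ⟨x, hx⟩ := hsup D hD
    have hxU : x ∈ U := hsub (Set.mem_iInter₂.mpr fun d hd => hx.1 d hd)
    obtain ⟨d, hdD, hdU⟩ := (hscott U hU).2 D hD x hx hxU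
    exact ⟨d, hdD, hdU⟩
  tfae_finish
end

section
/- Let X be a T0 space, A a closed subset of X, and {U_n : n ∈ ℕ} a decreasing sequence of open subsets of X such that A is a minimal closed set meeting every U_n. If x_n ∈ U_n ∩ A for each n, then every subset of {x_n : n ∈ ℕ} is compact. -/
/-!
Since `A` is minimal, for every open `V` meeting `A` the closed proper subset `A \ V` misses
some `U n`, so `U n ∩ A ⊆ V` and the sequence `x` eventually lies in `V`. Hence `x` converges
to every point of `A`, in particular to every `x k`. A set of terms of a sequence that contains
a limit of the sequence is compact.
-/

open Filter Topology Set

theorem eventually_mem_of_minimal_closed_meeting {X ι : Type*}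
    [TopologicalSpace X] [Preorder ι] {A : Set X} (hA : IsClosed A) {U : ι → Set X}
    (hU : Antitone U)
    (hmin : ∀ B : Set X, B ⊆ A → IsClosed B → (∀ i, (B ∩ U i).Nonempty) → B = A)
    {x : ι → X} (hx : ∀ i, x i ∈ U i ∩ A) {V : Set X} (hV : IsOpen V) (hAV : (A ∩ V).Nonempty) :
    ∀ᶠ i in atTop, x i ∈ V := by
  obtain ⟨i, hi⟩ : ∃ i, (A \ V) ∩ U i = ∅ := by
    by_contra! hmeet
    obtain ⟨a, haA, haV⟩ := hAV
    have hAV_eq : A \ V = A := hmin _ sdiff_subset (hA.sdiff hV) hmeet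
    exact (hAV_eq.symm ▸ haA).2 haV
  filter_upwards [mem_atTop i] with j hij
  by_contra hxj
  exact (eq_empty_iff_forall_notMem.mp hi) (x j) ⟨⟨(hx j).2, hxj⟩, hU hij (hx j).1⟩

theorem tendsto_nhds_of_minimal_closed_meeting {X ι : Type*}
    [TopologicalSpace X] [Preorder ι] {A : Set X} (hA : IsClosed A) {U : ι → Set X}
    (hU : Antitone U)
    (hmin : ∀ B : Set X, B ⊆ A → IsClosed B → (∀ i, (B ∩ U i).Nonempty) → B = A)
    {x : ι → X} (hx : ∀ i, x i ∈ U i ∩ A) {a : X} (ha : a ∈ A) :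
    Tendsto x atTop (𝓝 a) :=
  tendsto_nhds.mpr fun _ hV haV ↦
    eventually_mem_of_minimal_closed_meeting hA hU hmin hx hV ⟨a, ha, haV⟩

theorem IsCompact.of_subset_range_of_tendsto_cofinite {X ι : Type*} [TopologicalSpace X]
    {x : ι → X} {e : X} (hx : Tendsto x cofinite (𝓝 e)) {E : Set X} (heE : e ∈ E)
    (hE : E ⊆ range x) : IsCompact E := by
  let f : {i // x i ∈ E} → X := x ∘ Subtype.val
  have hf : Tendsto f cofinite (𝓝 e) := hx.comp Subtype.val_injective.tendsto_cofinite
  have hrange : insert e (range f) = E := by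
    refine Subset.antisymm (insert_subset heE ?_) fun y hy ↦ Or.inr ?_
    · rintro _ ⟨i, rfl⟩
      exact i.2
    · obtain ⟨i, rfl⟩ := hE hy
      exact ⟨⟨i, hy⟩, rfl⟩
  exact hrange ▸ hf.isCompact_insert_range_of_cofinite

theorem stmt11_general {X : Type*} [TopologicalSpace X] (A : Set X) (hA : IsClosed A)
    (U : ℕ → Set X) (hdec : ∀ n, U (n + 1) ⊆ U n)
    (hmin : ∀ B : Set X, B ⊆ A → IsClosed B → (∀ n, (B ∩ U n).Nonempty) → B = A)
    (x : ℕ → X) (hx : ∀ n, x n ∈ U n ∩ A)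
    (E : Set X) (hE : E ⊆ Set.range x) : IsCompact E := by
  rcases E.eq_empty_or_nonempty with rfl | ⟨e, he⟩
  · exact isCompact_empty
  obtain ⟨k, rfl⟩ := hE he
  have hlim : Tendsto x atTop (𝓝 (x k)) :=
    tendsto_nhds_of_minimal_closed_meeting hA (antitone_nat_of_succ_le hdec) hmin hx (hx k).2
  exact IsCompact.of_subset_range_of_tendsto_cofinite (Nat.cofinite_eq_atTop ▸ hlim) he hE

/-- If `A` is a minimal closed set meeting every member of a decreasing sequence of open
sets `U n`, and `x n ∈ U n ∩ A`, then every subset of `{x n : n ∈ ℕ}` is compact. -/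
theorem stmt11 {X : Type*} [TopologicalSpace X] [T0Space X] (A : Set X) (hA : IsClosed A)
    (U : ℕ → Set X) (hop : ∀ n, IsOpen (U n)) (hdec : ∀ n, U (n + 1) ⊆ U n)
    (hmeet : ∀ n, (A ∩ U n).Nonempty)
    (hmin : ∀ B : Set X, B ⊆ A → IsClosed B → (∀ n, (B ∩ U n).Nonempty) → B = A)
    (x : ℕ → X) (hx : ∀ n, x n ∈ U n ∩ A)
    (E : Set X) (hE : E ⊆ Set.range x) : IsCompact E :=
  stmt11_general A hA U hdec hmin x hx E hE
end

section
/- Let X be a T0 space and A an irreducible closed subset of X. If {◇U_i : i ∈ I} is an open neighborhood base at the point A in the sobrification X^s (where U_i are open in X), then A is a minimal closed set of X meeting every U_i. -/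
/-- The points of the sobrification: irreducible closed subsets of `X`. -/
def IrrC (X : Type*) [TopologicalSpace X] := {A : Set X // IsIrreducible A ∧ IsClosed A}

/-- The topology of the sobrification `X^s`, generated by the sets
`◇U = {F : F ∩ U ≠ ∅}` for `U` open in `X`. -/
def sobTop (X : Type*) [TopologicalSpace X] : TopologicalSpace (IrrC X) :=
  TopologicalSpace.generateFrom
    {s : Set (IrrC X) | ∃ U : Set X, IsOpen U ∧ s = {F : IrrC X | (F.1 ∩ U).Nonempty}}

/-!
Suppose a closed `B ⊆ A` meets every `Uᵢ` but misses a point of `A`. Then `◇Bᶜ` is an open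
neighbourhood of `A` in `X^s`, so it contains some `◇Uᵢ`. Testing this inclusion on the points
`closure {y}` of `X^s` gives `Uᵢ ⊆ Bᶜ`, contradicting that `B` meets `Uᵢ`.
-/

open Topology

namespace IrrC

variable {X : Type*} [TopologicalSpace X]

attribute [local instance] sobTop

def diamond (U : Set X) : Set (IrrC X) := {F | (F.1 ∩ U).Nonempty}

theorem isOpen_diamond {U : Set X} (hU : IsOpen U) : IsOpen (diamond U) :=
  TopologicalSpace.isOpen_generateFrom_of_mem ⟨U, hU, rfl⟩

def pure (y : X) : IrrC X := ⟨closure {y}, isIrreducible_singleton.closure, isClosed_closure⟩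

theorem pure_mem_diamond_iff {U : Set X} (hU : IsOpen U) {y : X} :
    pure y ∈ diamond U ↔ y ∈ U := by
  change (closure {y} ∩ U).Nonempty ↔ y ∈ U
  rw [closure_inter_open_nonempty_iff hU, Set.singleton_inter_nonempty]

theorem subset_of_diamond_subset {U V : Set X} (hV : IsOpen V)
    (h : diamond U ⊆ diamond V) : U ⊆ V := fun y hy =>
  (pure_mem_diamond_iff hV).1 (h ⟨y, subset_closure rfl, hy⟩)

variable {ι : Type*} {A : IrrC X} {U : ι → Set X}

theorem mem_diamond_of_hasBasis (h : (𝓝 A).HasBasis (fun _ => True) (diamond ∘ U)) (i : ι) :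
    A ∈ diamond (U i) :=
  mem_of_mem_nhds (h.mem_of_mem trivial)

theorem eq_of_hasBasis_of_subset {B : Set X} (h : (𝓝 A).HasBasis (fun _ => True) (diamond ∘ U))
    (hBA : B ⊆ A.1) (hB : IsClosed B) (hBU : ∀ i, (B ∩ U i).Nonempty) : B = A.1 := by
  refine hBA.antisymm fun x hxA => by_contra fun hxB => ?_
  have hnhds : diamond Bᶜ ∈ 𝓝 A := (isOpen_diamond hB.isOpen_compl).mem_nhds ⟨x, hxA, hxB⟩
  obtain ⟨i, -, hi⟩ := h.mem_iff.1 hnhds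
  obtain ⟨y, hyB, hyU⟩ := hBU i
  exact subset_of_diamond_subset hB.isOpen_compl hi hyU hyB

end IrrC

open IrrC in
theorem stmt12_general {X : Type*} [TopologicalSpace X] (A : Set X)
    (hirr : IsIrreducible A) (hcl : IsClosed A)
    {ι : Type*} (U : ι → Set X)
    (hbasis : (@nhds (IrrC X) (sobTop X) ⟨A, hirr, hcl⟩).HasBasis (fun _ : ι => True)
      (fun i => {F : IrrC X | (F.1 ∩ U i).Nonempty})) :
    (∀ i, (A ∩ U i).Nonempty) ∧
      ∀ B : Set X, B ⊆ A → IsClosed B → (∀ i, (B ∩ U i).Nonempty) → B = A :=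
  ⟨mem_diamond_of_hasBasis hbasis, fun _ => eq_of_hasBasis_of_subset hbasis⟩

/-- If `{◇Uᵢ}` is a neighborhood base at the point `A` of the sobrification `X^s`, then
`A` is a minimal closed set of `X` meeting every `Uᵢ`. -/
theorem stmt12 {X : Type*} [TopologicalSpace X] [T0Space X] (A : Set X)
    (hirr : IsIrreducible A) (hcl : IsClosed A)
    {ι : Type*} (U : ι → Set X) (hop : ∀ i, IsOpen (U i))
    (hbasis : (@nhds (IrrC X) (sobTop X) ⟨A, hirr, hcl⟩).HasBasis (fun _ : ι => True)
      (fun i => {F : IrrC X | (F.1 ∩ U i).Nonempty})) :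
    (∀ i, (A ∩ U i).Nonempty) ∧
      ∀ B : Set X, B ⊆ A → IsClosed B → (∀ i, (B ∩ U i).Nonempty) → B = A :=
  stmt12_general A hirr hcl U hbasis
end

section
/- If a T0 space X is first-countable and has a countable underlying set, then its sobrification X^s is first-countable. -/
open TopologicalSpace Filter Set Topology in
/-- If a T0 space is first-countable with countable underlying set, then its
sobrification is first-countable. -/
theorem stmt15 {X : Type*} [TopologicalSpace X] [T0Space X]
    [FirstCountableTopology X] [Countable X] :
    @FirstCountableTopology (IrrC X) (sobTop X) := by
  letI : TopologicalSpace (IrrC X) := sobTop X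
  choose B hBas using fun x : X => (𝓝 x).exists_antitone_basis
  refine ⟨fun F => ?_⟩
  set D : X × ℕ → Set (IrrC X) :=
    fun p => {G : IrrC X | (G.1 ∩ interior (B p.1 p.2)).Nonempty} with hD
  have key : ∀ V : Set (IrrC X),
      TopologicalSpace.GenerateOpen
        {s : Set (IrrC X) | ∃ U : Set X, IsOpen U ∧
          s = {F : IrrC X | (F.1 ∩ U).Nonempty}} V → F ∈ V →
      ∃ U : Set X, IsOpen U ∧ (F.1 ∩ U).Nonempty ∧
        {G : IrrC X | (G.1 ∩ U).Nonempty} ⊆ V := by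
    intro V hV
    induction hV with
    | basic s hs =>
      intro hF
      obtain ⟨U, hU, rfl⟩ := hs
      exact ⟨U, hU, hF, subset_rfl⟩
    | univ =>
      intro _
      exact ⟨Set.univ, isOpen_univ, by simpa using F.2.1.1, fun _ _ => trivial⟩
    | inter V W hV hW ihV ihW =>
      intro hF
      obtain ⟨U1, hU1, hFU1, hsub1⟩ := ihV hF.1
      obtain ⟨U2, hU2, hFU2, hsub2⟩ := ihW hF.2
      refine ⟨U1 ∩ U2, hU1.inter hU2, F.2.1.2 U1 U2 hU1 hU2 hFU1 hFU2, ?_⟩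
      rintro G ⟨y, hyG, hy1, hy2⟩
      exact ⟨hsub1 ⟨y, hyG, hy1⟩, hsub2 ⟨y, hyG, hy2⟩⟩
    | sUnion T hT ih =>
      rintro ⟨V, hVT, hFV⟩
      obtain ⟨U, hU, h1, h2⟩ := ih V hVT hFV
      exact ⟨U, hU, h1, h2.trans (Set.subset_sUnion_of_mem hVT)⟩
  have hbasis : (𝓝 F).HasBasis (fun p : X × ℕ => F ∈ D p) D := by
    constructor
    intro t
    constructor
    · intro ht
      obtain ⟨V, hVt, hVopen, hFV⟩ := mem_nhds_iff.mp ht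
      obtain ⟨U, hU, hFU, hsub⟩ := key V hVopen hFV
      obtain ⟨x, hxF, hxU⟩ := hFU
      obtain ⟨n, -, hn⟩ := (hBas x).toHasBasis.mem_iff.mp (hU.mem_nhds hxU)
      refine ⟨(x, n), ⟨x, hxF, ?_⟩, ?_⟩
      · exact mem_interior_iff_mem_nhds.mpr ((hBas x).toHasBasis.mem_of_mem trivial)
      · rintro G ⟨y, hyG, hyB⟩
        exact hVt (hsub ⟨y, hyG, (interior_subset.trans hn) hyB⟩)
    · rintro ⟨p, hFp, hpt⟩
      have hopen : IsOpen (D p) :=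
        TopologicalSpace.GenerateOpen.basic _
          ⟨interior (B p.1 p.2), isOpen_interior, rfl⟩
      exact mem_of_superset (hopen.mem_nhds hFp) hpt
  exact hbasis.isCountablyGenerated
end

section
/- Let X be a first-countable T0 space, Y an ω-well-filtered T0 space, and f : X → Y continuous. Then for every irreducible subset A of X and every countable subset {a_n : n ∈ ℕ} of the closure of A, the set ⋂_{n∈ℕ} ↑f(a_n) ∩ cl(f(A)) is nonempty (where ↑ is taken in the specialization order of Y). -/
/-- `X` is ω-well-filtered. -/
def OmegaWellFiltered (X : Type*) [TopologicalSpace X] : Prop :=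
  ∀ K : ℕ → Set X, (∀ n, (K n).Nonempty ∧ IsCompact (K n) ∧ IsSaturatedSet (K n)) →
    (∀ n, K (n + 1) ⊆ K n) → ∀ U : Set X, IsOpen U → (⋂ n, K n) ⊆ U → ∃ n, K n ⊆ U

open Filter Set Topology

theorem isSaturatedSet_nhdsKer {X : Type*} [TopologicalSpace X] (s : Set X) :
    IsSaturatedSet (nhdsKer s) := by
  rw [IsSaturatedSet, ← nhdsKer_def, nhdsKer_nhdsKer]

theorem OmegaWellFiltered.iInter_inter_nonempty {Y : Type*} [TopologicalSpace Y]
    (hY : OmegaWellFiltered Y) {K : ℕ → Set Y} (hcpt : ∀ n, IsCompact (K n))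
    (hsat : ∀ n, IsSaturatedSet (K n)) (hanti : ∀ n, K (n + 1) ⊆ K n) {C : Set Y}
    (hC : IsClosed C) (hKC : ∀ n, (K n ∩ C).Nonempty) : ((⋂ n, K n) ∩ C).Nonempty := by
  by_contra h
  obtain ⟨n, hn⟩ := hY K (fun n => ⟨(hKC n).mono inter_subset_left, hcpt n, hsat n⟩) hanti Cᶜ
    hC.isOpen_compl fun z hzK hzC => h ⟨z, hzK, hzC⟩
  obtain ⟨z, hzK, hzC⟩ := hKC n
  exact hn hzK hzC

theorem IsIrreducible.inter_biInter_nhds_nonempty {X : Type*} [TopologicalSpace X] {A : Set X}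
    (hA : IsIrreducible A) {s : Finset X} (hs : ∀ p ∈ s, p ∈ closure A) {U : X → Set X}
    (hU : ∀ p ∈ s, U p ∈ 𝓝 p) : (A ∩ ⋂ p ∈ s, U p).Nonempty := by
  classical
  obtain ⟨x, hxA, hx⟩ := isIrreducible_iff_sInter.mp hA (s.image fun p => interior (U p))
    (by simp [isOpen_interior]) (by
      simp only [Finset.forall_mem_image]
      intro p hp
      rw [inter_comm]
      exact mem_closure_iff.mp (hs p hp) _ isOpen_interior
        (mem_interior_iff_mem_nhds.mpr (hU p hp)))
  exact ⟨x, hxA, mem_iInter₂.mpr fun p hp =>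
    interior_subset (hx _ (Finset.mem_coe.mpr (Finset.mem_image_of_mem _ hp)))⟩

theorem Filter.HasAntitoneBasis.tendsto_of_eventually_mem {α ι : Type*} {l : Filter α}
    {V : ℕ → Set α} (hV : l.HasAntitoneBasis V) {L : Filter ι} {x : ι → α} {idx : ι → ℕ}
    (hidx : Tendsto idx L atTop) (hx : ∀ᶠ k in L, x k ∈ V (idx k)) : Tendsto x L l :=
  hV.tendsto_right_iff.mpr fun j _ =>
    (hx.and (hidx.eventually_ge_atTop j)).mono fun _ hk => hV.antitone hk.2 hk.1

theorem IsIrreducible.exists_seq_tendsto {X : Type*} [TopologicalSpace X]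
    [FirstCountableTopology X] {A : Set X} (hA : IsIrreducible A) {a : ℕ → X}
    (ha : ∀ n, a n ∈ closure A) :
    ∃ x : ℕ → X, (∀ k, x k ∈ A) ∧ (∀ n, Tendsto x atTop (𝓝 (a n))) ∧
      ∀ l, Tendsto x atTop (𝓝 (x l)) := by
  classical
  choose V hV using fun p : X => (𝓝 p).exists_antitone_basis
  -- a pair `(i, p)` records the stage `i` at which the point `p` was chosen
  obtain ⟨q, hqA, hqr⟩ := exists_seq_of_forall_finset_exists
    (fun q : ℕ × X => q.2 ∈ A ∧ ∀ n ≤ q.1, q.2 ∈ V (a n) q.1)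
    (fun q q' => q.1 < q'.1 ∧ q'.2 ∈ V q.2 q'.1) fun s hs => by
      set j := s.sup Prod.fst + 1
      obtain ⟨y, hyA, hy⟩ := hA.inter_biInter_nhds_nonempty
        (s := (Finset.range (j + 1)).image a ∪ s.image Prod.snd) (U := fun p => V p j)
        (by
          simp only [Finset.mem_union, Finset.mem_image]
          rintro _ (⟨n, -, rfl⟩ | ⟨r, hr, rfl⟩)
          exacts [ha n, subset_closure (hs r hr).1])
        fun p _ => (hV p).mem j
      rw [mem_iInter₂] at hy
      refine ⟨(j, y), ⟨hyA, fun n hn => hy _ ?_⟩, fun r hr => ⟨?_, hy _ ?_⟩⟩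
      · exact Finset.mem_union_left _ (Finset.mem_image_of_mem a (by simpa [Nat.lt_succ_iff]))
      · exact Nat.lt_succ_of_le (Finset.le_sup (f := Prod.fst) hr)
      · exact Finset.mem_union_right _ (Finset.mem_image_of_mem _ hr)
  have hidx : Tendsto (fun k => (q k).1) atTop atTop :=
    StrictMono.tendsto_atTop fun m n h => (hqr m n h).1
  refine ⟨fun k => (q k).2, fun k => (hqA k).1, fun n => ?_, fun l => ?_⟩
  · exact (hV (a n)).tendsto_of_eventually_mem hidx
      ((hidx.eventually_ge_atTop n).mono fun k hk => (hqA k).2 n hk)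
  · exact (hV (q l).2).tendsto_of_eventually_mem hidx
      ((eventually_gt_atTop l).mono fun k hk => (hqr l k hk).2)

section TailNhdsKer

variable {Y : Type*} [TopologicalSpace Y]

/-- The upward closure `↑{y k | k ≥ m}` in the specialization order. -/
def tailNhdsKer (y : ℕ → Y) (m : ℕ) : Set Y :=
  nhdsKer (range fun k => y (k + m))

theorem self_mem_tailNhdsKer (y : ℕ → Y) (m : ℕ) : y m ∈ tailNhdsKer y m :=
  subset_nhdsKer ⟨0, by simp⟩

theorem tailNhdsKer_succ_subset (y : ℕ → Y) (m : ℕ) : tailNhdsKer y (m + 1) ⊆ tailNhdsKer y m :=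
  nhdsKer_mono <| range_subset_iff.mpr fun k => ⟨k + 1, by simp only [add_right_comm, add_assoc]⟩

theorem isCompact_tailNhdsKer {y : ℕ → Y} {m : ℕ} (hy : Tendsto y atTop (𝓝 (y m))) :
    IsCompact (tailNhdsKer y m) := by
  have h := ((tendsto_add_atTop_iff_nat m).mpr hy).isCompact_insert_range
  rw [insert_eq_of_mem (mem_range.mpr ⟨0, by rw [zero_add]⟩)] at h
  exact h.nhdsKer

theorem specializes_of_mem_iInter_tailNhdsKer {y : ℕ → Y} {b z : Y}
    (hy : Tendsto y atTop (𝓝 b)) (hz : z ∈ ⋂ m, tailNhdsKer y m) : z ⤳ b := by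
  refine specializes_iff_forall_open.mpr fun W hW hbW => ?_
  obtain ⟨N, hN⟩ := eventually_atTop.mp (hy (hW.mem_nhds hbW))
  exact hW.nhdsKer_subset.mpr (range_subset_iff.mpr fun k => hN _ (Nat.le_add_left N k))
    (mem_iInter.mp hz N)

end TailNhdsKer

theorem stmt18_general {X Y : Type*} [TopologicalSpace X] [FirstCountableTopology X]
    [TopologicalSpace Y] (hY : OmegaWellFiltered Y)
    (f : X → Y) (hf : Continuous f) (A : Set X) (hA : IsIrreducible A)
    (a : ℕ → X) (ha : ∀ n, a n ∈ closure A) :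
    ((⋂ n, {z : Y | f (a n) ∈ closure {z}}) ∩ closure (f '' A)).Nonempty := by
  obtain ⟨x, hxA, hxa, hxx⟩ := hA.exists_seq_tendsto ha
  obtain ⟨z, hzK, hzA⟩ := hY.iInter_inter_nonempty (K := tailNhdsKer (f ∘ x))
    (fun m => isCompact_tailNhdsKer ((hf.tendsto _).comp (hxx m)))
    (fun _ => isSaturatedSet_nhdsKer _) (tailNhdsKer_succ_subset _) isClosed_closure
    fun m => ⟨f (x m), self_mem_tailNhdsKer _ m, subset_closure (mem_image_of_mem f (hxA m))⟩
  exact ⟨z, mem_iInter.mpr fun n =>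
    (specializes_of_mem_iInter_tailNhdsKer ((hf.tendsto _).comp (hxa n)) hzK).mem_closure, hzA⟩

/-- For a continuous map `f` from a first-countable T0 space to an ω-well-filtered T0
space, an irreducible `A ⊆ X`, and a sequence `aₙ` in the closure of `A`, the set
`⋂ₙ ↑f(aₙ) ∩ cl(f(A))` is nonempty (where `↑y = {z : y ≤ z}` in the specialization
order of `Y`, i.e. `y ∈ closure {z}`). -/
theorem stmt18 {X Y : Type*} [TopologicalSpace X] [T0Space X] [FirstCountableTopology X]
    [TopologicalSpace Y] [T0Space Y] (hY : OmegaWellFiltered Y)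
    (f : X → Y) (hf : Continuous f) (A : Set X) (hA : IsIrreducible A)
    (a : ℕ → X) (ha : ∀ n, a n ∈ closure A) :
    ((⋂ n, {z : Y | f (a n) ∈ closure {z}}) ∩ closure (f '' A)).Nonempty :=
  stmt18_general hY f hf A hA a ha
end
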